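/- Let a ∈ A. For n ∈ ℕ set i_n := i if n is odd and i_n := j if n is even, and for m ∈ ℕ₀ set a_m := i_m i_{m−1} ⋯ i_1 ▷ a (so a_0 = a). Suppose d := |R⁺_a| is finite. Then R⁺_a = { w_m(α_{i_{m+1},a_m}) : 0 ≤ m < d }, where w_m denotes the σ-composite of the word (i_1, …, i_m) at a_m (whose target is a). Moreover α_{j,a} = w_{d−1}(α_{i_d, a_{d−1}}). -/

import Mathlib

open Pointwise

variable {N : Type*} {A : Type*}

/-- The element `(i j)^m ▷ a` for the action of `F₂(N)` on `A`. -/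
def altIter (act : N → A → A) (i j : N) (a : A) : ℕ → A
  | 0 => a
  | m + 1 => act i (act j (altIter act i j a m))

/-- The set `Θ(i,j;a)`. -/
def ThetaSet (act : N → A → A) (i j : N) (a : A) : Set A :=
  {x | ∃ m : ℕ, x = altIter act i j a m ∨ x = altIter act j i a m}

/-- The set of `ℕ₀`-linear combinations of elements of `s`. -/
def NSpan (s : Set (N →₀ ℝ)) : Set (N →₀ ℝ) :=
  (AddSubmonoid.closure s : Set (N →₀ ℝ))

/-- A generalized root system: a transitive action of `F₂(N)` on `A` (axiom (1)),
roots `root a ⊆ ℝ^{(N)}` with simple roots `α n a` forming a basis (axiom (2)),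
and maps `σ i a ∈ GL(ℝ^{(N)})`, satisfying axioms (3)-(7). -/
structure GRS (N : Type*) (A : Type*) where
  act : N → A → A
  act_invol : ∀ n a, act n (act n a) = a
  act_trans : ∀ a b : A, ∃ l : List N, l.foldr act a = b
  root : A → Set (N →₀ ℝ)
  α : N → A → N →₀ ℝ
  α_mem : ∀ n a, α n a ∈ root a
  α_indep : ∀ a, LinearIndependent ℝ fun n => α n a
  α_span : ∀ a, Submodule.span ℝ (Set.range fun n => α n a) = ⊤
  σ : N → A → (N →₀ ℝ) ≃ₗ[ℝ] (N →₀ ℝ)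
  ax3 : ∀ a, root a =
    root a ∩ NSpan (Set.range fun n => α n a) ∪ -(root a ∩ NSpan (Set.range fun n => α n a))
  ax4 : ∀ i a, (Set.range fun r : ℝ => r • α i a) ∩ root a = {α i a, -α i a}
  ax5_root : ∀ i a, ⇑(σ i a) '' root a = root (act i a)
  ax5_diag : ∀ i a, σ i a (α i a) = -α i (act i a)
  ax5_off : ∀ i a j, j ≠ i →
    ∃ m : ℕ, σ i a (α j a) = α j (act i a) + (m : ℝ) • α i (act i a)
  ax6 : ∀ i a v, σ i (act i a) (σ i a v) = v
  ax7 : ∀ a (i j : N), i ≠ j →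
    (root a ∩ {β | ∃ p q : ℕ, β = (p : ℝ) • α i a + (q : ℝ) • α j a}).Finite →
    (ThetaSet act i j a).Finite ∧
      (ThetaSet act i j a).ncard ∣
        (root a ∩ {β | ∃ p q : ℕ, β = (p : ℝ) • α i a + (q : ℝ) • α j a}).ncard

/-- The positive roots `R⁺_a`. -/
def GRS.pos (G : GRS N A) (a : A) : Set (N →₀ ℝ) :=
  G.root a ∩ NSpan (Set.range fun n => G.α n a)

/-- The target `i₁ ⋯ i_m ▷ a` of the word `(i₁, …, i_m)` at `a`. -/
def GRS.target (G : GRS N A) (l : List N) (a : A) : A :=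
  l.foldr G.act a

/-- The σ-composite `σ_{i₁,b₁} ∘ ⋯ ∘ σ_{i_m,b_m}` of the word `(i₁, …, i_m)` at `a`. -/
noncomputable def GRS.wmap (G : GRS N A) : List N → A → (N →₀ ℝ) ≃ₗ[ℝ] (N →₀ ℝ)
  | [], _ => LinearEquiv.refl ℝ _
  | i :: l, a => (G.wmap l a).trans (G.σ i (G.target l a))

/-- The length `ℓ` of a word at `a`: the minimal length of a word at `a`
with the same target and the same σ-composite. -/
noncomputable def GRS.len (G : GRS N A) (l : List N) (a : A) : ℕ :=
  sInf {m | ∃ l' : List N, l'.length = m ∧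
    G.target l' a = G.target l a ∧ G.wmap l' a = G.wmap l a}

/-- A word of length `m` at `a` is reduced if `ℓ = m`. -/
def GRS.Reduced (G : GRS N A) (l : List N) (a : A) : Prop :=
  G.len l a = l.length

/-- `m_{i,j;a} = |R_a ∩ (ℕ₀ α_{i,a} + ℕ₀ α_{j,a})|`. -/
noncomputable def GRS.mij (G : GRS N A) (i j : N) (a : A) : ℕ :=
  (G.root a ∩ {β | ∃ p q : ℕ, β = (p : ℝ) • G.α i a + (q : ℝ) • G.α j a}).ncard

/-- The alternating word `(i₁, …, i_m)` with `i_k = i` for `k` odd (leftmost letter `i`). -/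
def altList (i j : N) : ℕ → List N
  | 0 => []
  | m + 1 => i :: altList j i m

/-- The alternating word of length `m` in the letters `i,j` whose rightmost letter is `i`. -/
def altR (i j : N) : ℕ → List N
  | 0 => []
  | m + 1 => altR j i m ++ [i]

/-- `a_m = i_m ⋯ i_1 ▷ a` for the alternating sequence with `i_k = i` for odd `k`. -/
def aIter (act : N → A → A) (i j : N) (a : A) : ℕ → A
  | 0 => a
  | m + 1 => act (if m % 2 = 0 then i else j) (aIter act i j a m)

/-- The set of real roots `R^{re}_a`. -/
def GRS.reroot (G : GRS N A) (a : A) : Set (N →₀ ℝ) :=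
  {β | ∃ (b : A) (l : List N) (n : N), G.target l b = a ∧ β = G.wmap l b (G.α n b)}

/-- The word `C(i,j;a)`: alternating of length `m_{i,j;a} - 1` with leftmost letter `i`. -/
noncomputable def GRS.Cword (G : GRS N A) (i j : N) (a : A) : List N :=
  altList i j (G.mij i j a - 1)

/-!
In rank two every positive root at `c` is a nonnegative combination of `α x c` and `α y c`, so
the positive roots are linearly ordered by the sign of the determinant `det x y c β γ` of their
coordinates; let `index γ` count the positive roots before `γ`. For `γ ≠ α x c`, the reflection
`σ x c` maps the positive roots other than `α x c` onto those at `x ▷ c` other than `α x`, and it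
preserves the order once the roles of `x` and `y` are exchanged. Hence
`index γ = index (σ x c γ) + 1`, and induction on the index shows that the positive root of index
`k` is `chain x y c k`, a simple root moved by `k` alternating reflections. So the chain
enumerates `R⁺_c` bijectively by `0, …, d - 1` with `d = |R⁺_c|`, and `α y c`, which comes after
every other positive root, has index `d - 1`.
-/

structure TwoLetters (x y : N) : Prop where
  ne : x ≠ y
  eq_or_eq : ∀ n, n = x ∨ n = y

theorem TwoLetters.symm {x y : N} (h : TwoLetters x y) : TwoLetters y x :=
  ⟨h.ne.symm, fun n => (h.eq_or_eq n).symm⟩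

lemma ite_mod_two_succ {α : Type*} (x y : α) (m : ℕ) :
    (if (m + 1) % 2 = 0 then x else y) = if m % 2 = 0 then y else x := by
  rcases Nat.mod_two_eq_zero_or_one m with h | h <;> simp [h, Nat.succ_mod_two_eq_zero_iff]

lemma aIter_succ' (act : N → A → A) (x y : N) (c : A) (m : ℕ) :
    aIter act x y c (m + 1) = aIter act y x (act x c) m := by
  induction m with
  | zero => rfl
  | succ m ih => rw [aIter, ih, ite_mod_two_succ, aIter]

namespace GRS

variable (G : GRS N A)

noncomputable def basis (c : A) : Module.Basis N ℝ (N →₀ ℝ) :=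
  Module.Basis.mk (G.α_indep c) (G.α_span c).ge

lemma basis_apply (c : A) (n : N) : G.basis c n = G.α n c :=
  Module.Basis.mk_apply _ _ _

noncomputable def coord (c : A) (n : N) : (N →₀ ℝ) →ₗ[ℝ] ℝ :=
  (G.basis c).coord n

@[simp]
lemma coord_alpha_self (c : A) (n : N) : G.coord c n (G.α n c) = 1 := by
  rw [coord, ← G.basis_apply, Module.Basis.coord_apply, Module.Basis.repr_self,
    Finsupp.single_eq_same]

@[simp]
lemma coord_alpha_of_ne (c : A) {m n : N} (h : m ≠ n) : G.coord c n (G.α m c) = 0 := by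
  rw [coord, ← G.basis_apply, Module.Basis.coord_apply, Module.Basis.repr_self,
    Finsupp.single_eq_of_ne h.symm]

lemma eq_coord_smul_add_coord_smul {x y : N} (hxy : TwoLetters x y) (c : A)
    (β : N →₀ ℝ) : β = G.coord c x β • G.α x c + G.coord c y β • G.α y c := by
  refine (G.basis c).ext_elem fun n => ?_
  rw [← Module.Basis.coord_apply, ← Module.Basis.coord_apply]
  change G.coord c n β = G.coord c n _
  rcases hxy.eq_or_eq n with rfl | rfl
  · simp [hxy.ne.symm]
  · simp [hxy.ne]

lemma coord_nonneg_of_mem_pos {c : A} {β : N →₀ ℝ} (hβ : β ∈ G.pos c) (n : N) :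
    0 ≤ G.coord c n β := by
  obtain ⟨-, hspan⟩ := hβ
  induction hspan using AddSubmonoid.closure_induction with
  | mem γ hγ =>
    obtain ⟨m, rfl⟩ := hγ
    rcases eq_or_ne m n with rfl | h <;> simp [*]
  | zero => simp
  | add γ δ _ _ hγ hδ => rw [map_add]; exact add_nonneg hγ hδ

lemma alpha_mem_pos (n : N) (c : A) : G.α n c ∈ G.pos c :=
  ⟨G.α_mem n c, AddSubmonoid.subset_closure ⟨n, rfl⟩⟩

lemma zero_notMem_root (n : N) (c : A) : (0 : N →₀ ℝ) ∉ G.root c := by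
  intro h
  have h0 : (0 : N →₀ ℝ) ∈ ({G.α n c, -G.α n c} : Set _) := by
    rw [← G.ax4 n c]
    exact ⟨⟨0, zero_smul ℝ _⟩, h⟩
  have hα : G.α n c ≠ 0 := G.basis_apply c n ▸ (G.basis c).ne_zero n
  rcases h0 with h0 | h0
  · exact hα h0.symm
  · exact hα (neg_eq_zero.mp (Set.mem_singleton_iff.mp h0).symm)

lemma neg_notMem_pos (n : N) {c : A} {β : N →₀ ℝ} (hβ : β ∈ G.pos c) : -β ∉ G.pos c := by
  intro hβ'
  have hcoord : ∀ m, G.coord c m β = 0 := fun m => by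
    have := G.coord_nonneg_of_mem_pos hβ' m
    rw [map_neg] at this
    linarith [G.coord_nonneg_of_mem_pos hβ m]
  change ∀ m, (G.basis c).coord m β = 0 at hcoord
  rw [(G.basis c).forall_coord_eq_zero_iff] at hcoord
  exact G.zero_notMem_root n c (hcoord ▸ hβ.1)

lemma eq_alpha_of_coord_eq_zero {x y : N} (hxy : TwoLetters x y) {c : A} {β : N →₀ ℝ}
    (hβ : β ∈ G.pos c) (h0 : G.coord c y β = 0) : β = G.α x c := by
  have hline : β ∈ (Set.range fun r : ℝ => r • G.α x c) ∩ G.root c := by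
    refine ⟨⟨G.coord c x β, ?_⟩, hβ.1⟩
    conv_rhs => rw [G.eq_coord_smul_add_coord_smul hxy c β, h0, zero_smul, add_zero]
  rw [G.ax4 x c] at hline
  rcases hline with h | h
  · exact h
  · rw [Set.mem_singleton_iff] at h
    refine absurd ?_ (G.neg_notMem_pos x hβ)
    rw [h, neg_neg]
    exact G.alpha_mem_pos x c

lemma coord_pos_of_ne_alpha {x y : N} (hxy : TwoLetters x y) {c : A} {β : N →₀ ℝ}
    (hβ : β ∈ G.pos c) (hne : β ≠ G.α x c) : 0 < G.coord c y β :=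
  (G.coord_nonneg_of_mem_pos hβ y).lt_of_ne fun h0 =>
    hne (G.eq_alpha_of_coord_eq_zero hxy hβ h0.symm)

lemma exists_sigma_eq {x y : N} (hxy : TwoLetters x y) (c : A) : ∃ m : ℝ, ∀ β,
    G.σ x c β = (m * G.coord c y β - G.coord c x β) • G.α x (G.act x c)
      + G.coord c y β • G.α y (G.act x c) := by
  obtain ⟨m, hm⟩ := G.ax5_off x c y hxy.ne.symm
  refine ⟨m, fun β => ?_⟩
  conv_lhs => rw [G.eq_coord_smul_add_coord_smul hxy c β]
  rw [map_add, map_smul, map_smul, G.ax5_diag, hm]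
  module

lemma coord_sigma_other {x y : N} (hxy : TwoLetters x y) (c : A) (β : N →₀ ℝ) :
    G.coord (G.act x c) y (G.σ x c β) = G.coord c y β := by
  obtain ⟨m, hm⟩ := G.exists_sigma_eq hxy c
  simp [hm, hxy.ne]

lemma sigma_sigma_act (x : N) (c : A) (β : N →₀ ℝ) :
    G.σ x c (G.σ x (G.act x c) β) = β := by
  simpa only [G.act_invol] using G.ax6 x (G.act x c) β

lemma sigma_mem_pos {x y : N} (hxy : TwoLetters x y) {c : A} {β : N →₀ ℝ}
    (hβ : β ∈ G.pos c) (hne : β ≠ G.α x c) : G.σ x c β ∈ G.pos (G.act x c) := by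
  have hroot : G.σ x c β ∈ G.root (G.act x c) := G.ax5_root x c ▸ ⟨β, hβ.1, rfl⟩
  rw [G.ax3] at hroot
  refine hroot.resolve_right fun hneg => ?_
  have := G.coord_nonneg_of_mem_pos hneg y
  rw [map_neg, G.coord_sigma_other hxy] at this
  linarith [G.coord_pos_of_ne_alpha hxy hβ hne]

lemma sigma_act_mem_pos {x y : N} (hxy : TwoLetters x y) {c : A} {β : N →₀ ℝ}
    (hβ : β ∈ G.pos (G.act x c)) (hne : β ≠ G.α x (G.act x c)) :
    G.σ x (G.act x c) β ∈ G.pos c := by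
  simpa only [G.act_invol] using G.sigma_mem_pos hxy hβ hne

lemma pos_act_subset {x y : N} (hxy : TwoLetters x y) (c : A) :
    G.pos (G.act x c) ⊆ insert (G.α x (G.act x c)) (G.σ x c '' G.pos c) := by
  intro β hβ
  by_cases hne : β = G.α x (G.act x c)
  · exact Or.inl hne
  · exact Or.inr ⟨_, G.sigma_act_mem_pos hxy hβ hne, G.sigma_sigma_act x c β⟩

lemma pos_act_finite {x y : N} (hxy : TwoLetters x y) {c : A} (hfin : (G.pos c).Finite) :
    (G.pos (G.act x c)).Finite :=
  ((hfin.image _).insert _).subset (G.pos_act_subset hxy c)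

noncomputable def det (x y : N) (c : A) (β γ : N →₀ ℝ) : ℝ :=
  G.coord c x β * G.coord c y γ - G.coord c y β * G.coord c x γ

lemma det_alpha_left {x y : N} (hxy : x ≠ y) (c : A) (γ : N →₀ ℝ) :
    G.det x y c (G.α x c) γ = G.coord c y γ := by
  simp [det, hxy]

lemma det_alpha_right {x y : N} (hxy : x ≠ y) (c : A) (β : N →₀ ℝ) :
    G.det x y c β (G.α x c) = -G.coord c y β := by
  simp [det, hxy]

/-- In the coordinates `(x, y)` the matrix of `σ x c` is `[[-1, m], [0, 1]]`, of determinant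
`-1`; swapping the roles of `x` and `y` at `act x c` restores the sign. -/
lemma det_sigma {x y : N} (hxy : TwoLetters x y) (c : A) (β γ : N →₀ ℝ) :
    G.det y x (G.act x c) (G.σ x c β) (G.σ x c γ) = G.det x y c β γ := by
  obtain ⟨m, hm⟩ := G.exists_sigma_eq hxy c
  simp only [det, hm, map_add, map_smul, G.coord_alpha_self, G.coord_alpha_of_ne _ hxy.ne,
    G.coord_alpha_of_ne _ hxy.ne.symm, smul_eq_mul]
  ring

def rootsBefore (x y : N) (c : A) (γ : N →₀ ℝ) : Set (N →₀ ℝ) :=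
  {β | β ∈ G.pos c ∧ 0 < G.det x y c β γ}

noncomputable def index (x y : N) (c : A) (γ : N →₀ ℝ) : ℕ :=
  (G.rootsBefore x y c γ).ncard

lemma rootsBefore_eq_insert {x y : N} (hxy : TwoLetters x y) {c : A} {γ : N →₀ ℝ}
    (hγ : γ ∈ G.pos c) (hne : γ ≠ G.α x c) :
    G.rootsBefore x y c γ = insert (G.α x c)
      (G.σ x (G.act x c) '' G.rootsBefore y x (G.act x c) (G.σ x c γ)) := by
  ext β
  constructor
  · rintro ⟨hβ, hdet⟩
    by_cases hβα : β = G.α x c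
    · exact Or.inl hβα
    · refine Or.inr ⟨G.σ x c β, ⟨G.sigma_mem_pos hxy hβ hβα, ?_⟩, G.ax6 x c β⟩
      rwa [G.det_sigma hxy]
  · rintro (rfl | ⟨β, ⟨hβ, hdet⟩, rfl⟩)
    · exact ⟨G.alpha_mem_pos x c,
        G.det_alpha_left hxy.ne c γ ▸ G.coord_pos_of_ne_alpha hxy hγ hne⟩
    · have hβα : β ≠ G.α x (G.act x c) := by
        rintro rfl
        simp only [det, G.coord_alpha_self, G.coord_alpha_of_ne _ hxy.ne, zero_mul, one_mul,
          zero_sub, G.coord_sigma_other hxy] at hdet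
        linarith [G.coord_nonneg_of_mem_pos hγ y]
      refine ⟨G.sigma_act_mem_pos hxy hβ hβα, ?_⟩
      rwa [← G.det_sigma hxy, G.sigma_sigma_act]

lemma index_eq_succ {x y : N} (hxy : TwoLetters x y) {c : A} (hfin : (G.pos c).Finite)
    {γ : N →₀ ℝ} (hγ : γ ∈ G.pos c) (hne : γ ≠ G.α x c) :
    G.index x y c γ = G.index y x (G.act x c) (G.σ x c γ) + 1 := by
  have hnotMem : G.α x c ∉ G.σ x (G.act x c) '' G.rootsBefore y x (G.act x c) (G.σ x c γ) := by
    rintro ⟨β, ⟨hβ, -⟩, hβα⟩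
    have : β = -G.α x (G.act x c) := by rw [← G.ax5_diag, ← hβα, G.sigma_sigma_act]
    exact G.neg_notMem_pos x (G.alpha_mem_pos x (G.act x c)) (this ▸ hβ)
  have hfin' : (G.rootsBefore y x (G.act x c) (G.σ x c γ)).Finite :=
    (G.pos_act_finite hxy hfin).subset fun _ h => h.1
  rw [index, G.rootsBefore_eq_insert hxy hγ hne, Set.ncard_insert_of_notMem hnotMem (hfin'.image _),
    Set.ncard_image_of_injective _ (G.σ x (G.act x c)).injective, index]

lemma index_lt_ncard {x y : N} {c : A} (hfin : (G.pos c).Finite) {γ : N →₀ ℝ}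
    (hγ : γ ∈ G.pos c) : G.index x y c γ < (G.pos c).ncard :=
  Set.ncard_lt_ncard ⟨fun _ h => h.1, fun hsub => (hsub hγ).2.ne (by simp [det]; ring)⟩ hfin

lemma index_eq_zero_iff {x y : N} (hxy : TwoLetters x y) {c : A} (hfin : (G.pos c).Finite)
    {γ : N →₀ ℝ} (hγ : γ ∈ G.pos c) : G.index x y c γ = 0 ↔ γ = G.α x c := by
  rw [index, Set.ncard_eq_zero (hfin.subset fun _ h => h.1), Set.eq_empty_iff_forall_notMem]
  constructor
  · intro hempty
    by_contra hne
    exact hempty _ ⟨G.alpha_mem_pos x c,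
      G.det_alpha_left hxy.ne c γ ▸ G.coord_pos_of_ne_alpha hxy hγ hne⟩
  · rintro rfl β ⟨hβ, hdet⟩
    rw [G.det_alpha_right hxy.ne] at hdet
    linarith [G.coord_nonneg_of_mem_pos hβ y]

lemma index_alpha_other {x y : N} (hxy : TwoLetters x y) (c : A) :
    G.index x y c (G.α y c) = (G.pos c).ncard - 1 := by
  have hset : G.rootsBefore x y c (G.α y c) = G.pos c \ {G.α y c} := by
    ext β
    refine and_congr_right fun hβ => ?_
    simp only [det, G.coord_alpha_self, G.coord_alpha_of_ne _ hxy.ne.symm, mul_one, mul_zero,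
      sub_zero, Set.mem_singleton_iff]
    refine ⟨fun hpos hβα => ?_, G.coord_pos_of_ne_alpha hxy.symm hβ⟩
    rw [hβα, G.coord_alpha_of_ne _ hxy.ne.symm] at hpos
    exact hpos.false
  rw [index, hset, Set.ncard_sdiff_singleton_of_mem (G.alpha_mem_pos y c)]

noncomputable def chain : N → N → A → ℕ → (N →₀ ℝ)
  | x, _, c, 0 => G.α x c
  | x, y, c, m + 1 => G.σ x (G.act x c) (chain y x (G.act x c) m)

lemma eq_chain_of_index_eq {x y : N} (hxy : TwoLetters x y) {c : A} (hfin : (G.pos c).Finite)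
    {γ : N →₀ ℝ} (hγ : γ ∈ G.pos c) {k : ℕ} (hk : G.index x y c γ = k) :
    γ = G.chain x y c k := by
  induction k generalizing x y c γ with
  | zero => exact (G.index_eq_zero_iff hxy hfin hγ).1 hk
  | succ k ih =>
    have hne : γ ≠ G.α x c := fun h => by
      rw [← G.index_eq_zero_iff hxy hfin hγ] at h
      omega
    rw [G.index_eq_succ hxy hfin hγ hne, Nat.add_right_cancel_iff] at hk
    rw [chain, ← ih hxy.symm (G.pos_act_finite hxy hfin) (G.sigma_mem_pos hxy hγ hne) hk, G.ax6]

lemma pos_eq_image_chain {x y : N} (hxy : TwoLetters x y) {c : A} (hfin : (G.pos c).Finite) :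
    G.pos c = G.chain x y c '' Set.Iio (G.pos c).ncard := by
  refine Set.eq_of_subset_of_ncard_le (fun γ hγ => ⟨G.index x y c γ, G.index_lt_ncard hfin hγ,
    (G.eq_chain_of_index_eq hxy hfin hγ rfl).symm⟩) ?_ ((Set.finite_Iio _).image _)
  calc (G.chain x y c '' Set.Iio (G.pos c).ncard).ncard ≤ (Set.Iio (G.pos c).ncard).ncard :=
        Set.ncard_image_le (Set.finite_Iio _)
    _ = (G.pos c).ncard := by simp

lemma alpha_eq_chain {x y : N} (hxy : TwoLetters x y) {c : A} (hfin : (G.pos c).Finite) :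
    G.α y c = G.chain x y c ((G.pos c).ncard - 1) :=
  G.eq_chain_of_index_eq hxy hfin (G.alpha_mem_pos y c) (G.index_alpha_other hxy c)

lemma target_altList (m : ℕ) (x y : N) (c : A) :
    G.target (altList x y m) (aIter G.act x y c m) = c := by
  induction m generalizing x y c with
  | zero => rfl
  | succ m ih => rw [aIter_succ', altList, target, List.foldr_cons, ← target, ih, G.act_invol]

lemma chain_eq_wmap (m : ℕ) (x y : N) (c : A) :
    G.chain x y c m = G.wmap (altList x y m) (aIter G.act x y c m)
      (G.α (if m % 2 = 0 then x else y) (aIter G.act x y c m)) := by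
  induction m generalizing x y c with
  | zero => rfl
  | succ m ih =>
    rw [chain, ih, aIter_succ', ite_mod_two_succ, altList, wmap, LinearEquiv.trans_apply,
      G.target_altList]

end GRS

theorem stmt5_general (G : GRS N A) (i j : N) (hij : i ≠ j)
    (hN : ∀ n : N, n = i ∨ n = j) (a : A) (hfin : (G.pos a).Finite) :
    G.pos a = {β | ∃ m : ℕ, m < (G.pos a).ncard ∧
        β = G.wmap (altList i j m) (aIter G.act i j a m)
            (G.α (if m % 2 = 0 then i else j) (aIter G.act i j a m))} ∧
    G.α j a = G.wmap (altList i j ((G.pos a).ncard - 1))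
        (aIter G.act i j a ((G.pos a).ncard - 1))
        (G.α (if ((G.pos a).ncard - 1) % 2 = 0 then i else j)
          (aIter G.act i j a ((G.pos a).ncard - 1))) := by
  have hletters : TwoLetters i j := ⟨hij, hN⟩
  simp only [← G.chain_eq_wmap]
  refine ⟨?_, G.alpha_eq_chain hletters hfin⟩
  conv_lhs => rw [G.pos_eq_image_chain hletters hfin]
  ext β
  simp [eq_comm]

/-- (rank two, `d = |R⁺_a|` finite) description of `R⁺_a` via the
alternating words, and `α_{j,a} = w_{d−1}(α_{i_d,a_{d−1}})`. -/
theorem stmt5 [Nonempty A] (G : GRS N A) (i j : N) (hij : i ≠ j)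
    (hN : ∀ n : N, n = i ∨ n = j) (a : A) (hfin : (G.pos a).Finite) :
    G.pos a = {β | ∃ m : ℕ, m < (G.pos a).ncard ∧
        β = G.wmap (altList i j m) (aIter G.act i j a m)
            (G.α (if m % 2 = 0 then i else j) (aIter G.act i j a m))} ∧
    G.α j a = G.wmap (altList i j ((G.pos a).ncard - 1))
        (aIter G.act i j a ((G.pos a).ncard - 1))
        (G.α (if ((G.pos a).ncard - 1) % 2 = 0 then i else j)
          (aIter G.act i j a ((G.pos a).ncard - 1))) :=
  stmt5_general G i j hij hN a hfin
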